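/- Let s ∈ ℝ and η > 0, and let w : ℝ → [0,∞) be a measurable function such that w(ξ) ≥ η^{2^n} · f_n(T_*) · g_n(ξ) for every n ∈ ℕ and every ξ ∈ ℝ. Then, with C = min(1, 2^{2s}) > 0, one has the inequality (in [0,∞]): ∫_ℝ |ξ|^{2s} w(ξ)² dξ ≥ C · Σ_{n=1}^∞ 2^{n(2s−1)} · ( η² · e^{−(3/2)T_*·2^5} · 2^{−10} )^{2^n}, where e^{−(3/2)T_*·2^5} · 2^{−10} = 2^{−42}. -/

import Mathlib

open MeasureTheory Real Set

/-- The sequence of functions `g n`: `g 0` is the indicator of `(1,2)` and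
`g (n+1) = g n * g n` (convolution). -/
noncomputable def g : ℕ → ℝ → ℝ
  | 0 => Set.indicator (Set.Ioo (1:ℝ) 2) 1
  | n + 1 => fun ξ => ∫ ρ : ℝ, g n ρ * g n (ξ - ρ)

/-- `f n t = exp(-(3/2) t 2^(n+4)) 2^(-5(2^n-1)) 2^(5n)`. -/
noncomputable def f (n : ℕ) (t : ℝ) : ℝ :=
  Real.exp (-(3/2) * t * 2 ^ (n + 4)) * (2:ℝ) ^ (-(5:ℝ) * ((2:ℝ) ^ n - 1)) * 2 ^ (5 * n)

/-- The blow-up time `T_* = (2 ln 2)/3`. -/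
noncomputable def Tstar : ℝ := 2 * Real.log 2 / 3

/-- The (Fourier side) nonlinear term
`γ₁ (|·|v * |·|v)(ξ) - γ₂ (v * (·)² v)(ξ)`, as a well-defined element of `[0,∞]`
(recall `γ₂ ≤ 0 ≤ γ₁`). -/
noncomputable def nlTerm (γ₁ γ₂ : ℝ) (vτ : ℝ → ℝ) (ξ : ℝ) : ENNReal :=
  ENNReal.ofReal γ₁ * ∫⁻ ρ : ℝ, ENNReal.ofReal (|ρ| * vτ ρ * (|ξ - ρ| * vτ (ξ - ρ)))
  + ENNReal.ofReal (-γ₂) * ∫⁻ ρ : ℝ, ENNReal.ofReal (vτ ρ * ((ξ - ρ)^2 * vτ (ξ - ρ)))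

/-- A nonnegative measurable `v` on `[0,T] × ℝ` satisfies the Duhamel–Fourier
inequality if for all `t ∈ [0,T]` and `ξ ∈ ℝ`,
`v(t,ξ) ≥ η e^{-(3/2)tξ⁴} 𝟙_{(1,2)}(ξ) + ∫₀ᵗ e^{-(3/2)(t-τ)ξ⁴} (γ₁ (|·|v*|·|v) - γ₂ (v*(·)²v))(τ,ξ) dτ`,
the right-hand side being well defined in `[0,∞]`. -/
def DuhamelIneq (γ₁ γ₂ η T : ℝ) (v : ℝ → ℝ → ℝ) : Prop :=
  ∀ t ∈ Set.Icc (0:ℝ) T, ∀ ξ : ℝ,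
    ENNReal.ofReal (v t ξ) ≥
      ENNReal.ofReal (η * Real.exp (-(3/2) * t * ξ^4) * Set.indicator (Set.Ioo (1:ℝ) 2) 1 ξ)
      + ∫⁻ τ in Set.Ioc (0:ℝ) t,
          ENNReal.ofReal (Real.exp (-(3/2) * (t - τ) * ξ^4)) * nlTerm γ₁ γ₂ (v τ) ξ

open scoped ENNReal Convolution

/-!
Each `g n` is a probability density supported in `(2^n, 2^(n+1))` (supports add under
convolution), so Cauchy–Schwarz gives `∫ (g n)² ≥ 2^(-n)`. On that interval
`|ξ|^(2s) ≥ min(1, 2^(2s)) 2^(2ns)`, so the hypothesis on `w` bounds the integral of `|ξ|^(2s) w²`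
over it from below by `C 2^(n(2s-1)) (η^(2^n) f_n(T_*))²`; since
`f_n(T_*) = 2^(5(n+1)) 2^(-21·2^n)`, this dominates the `n`-th term of the series. Summing over
the disjoint dyadic intervals gives the bound.
-/

lemma g_succ (n : ℕ) : g (n + 1) = g n ⋆[ContinuousLinearMap.mul ℝ ℝ] g n := rfl

lemma measurable_g (n : ℕ) : Measurable (g n) := by
  induction n with
  | zero => exact measurable_one.indicator measurableSet_Ioo
  | succ n ih =>
    have h_integrand : Measurable fun p : ℝ × ℝ ↦ g n p.2 * g n (p.1 - p.2) :=
      (ih.comp measurable_snd).mul (ih.comp (measurable_fst.sub measurable_snd))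
    exact h_integrand.stronglyMeasurable.integral_prod_right'.measurable

lemma g_nonneg (n : ℕ) (ξ : ℝ) : 0 ≤ g n ξ := by
  cases n with
  | zero => exact indicator_nonneg (fun _ _ ↦ zero_le_one) ξ
  | succ n => exact integral_nonneg fun ρ ↦ mul_nonneg (g_nonneg n ρ) (g_nonneg n _)

lemma support_g_subset (n : ℕ) : Function.support (g n) ⊆ Ioo (2 ^ n) (2 ^ (n + 1)) := by
  induction n with
  | zero => simp [g]
  | succ n ih =>
    rw [g_succ]
    refine (support_convolution_subset (ContinuousLinearMap.mul ℝ ℝ)).trans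
      ((add_subset_add ih ih).trans ?_)
    rintro _ ⟨x, ⟨hx₁, hx₂⟩, y, ⟨hy₁, hy₂⟩, rfl⟩
    simp only [pow_succ] at *
    constructor <;> linarith

lemma integrable_g (n : ℕ) : Integrable (g n) := by
  induction n with
  | zero =>
    exact (integrableOn_const measure_Ioo_lt_top.ne).integrable_indicator measurableSet_Ioo
  | succ n ih => exact ih.integrable_convolution (ContinuousLinearMap.mul ℝ ℝ) ih

lemma integral_g (n : ℕ) : ∫ ξ, g n ξ = 1 := by
  induction n with
  | zero =>
    simp [g, integral_indicator measurableSet_Ioo]; norm_num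
  | succ n ih =>
    rw [g_succ,
      integral_convolution (ContinuousLinearMap.mul ℝ ℝ) (integrable_g n) (integrable_g n)]
    simp [ih]

theorem sq_lintegral_le_measure_mul_lintegral_sq {α : Type*} [MeasurableSpace α] {μ : Measure α}
    {s : Set α} (hs : MeasurableSet s) {F : α → ℝ≥0∞} (hF : AEMeasurable F μ)
    (hFs : Function.support F ⊆ s) :
    (∫⁻ x, F x ∂μ) ^ 2 ≤ μ s * ∫⁻ x, F x ^ 2 ∂μ := by
  have hF_eq : F * s.indicator 1 = F := by
    ext x
    by_cases hx : x ∈ s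
    · simp [hx]
    · simp [hx, Function.notMem_support.mp fun h ↦ hx (hFs h)]
  have h_ind : ∫⁻ x, s.indicator 1 x ^ (2:ℝ) ∂μ = μ s := by
    rw [← lintegral_indicator_one hs]
    congr with x
    by_cases hx : x ∈ s <;> simp [hx]
  have holder := ENNReal.lintegral_mul_le_Lp_mul_Lq μ Real.HolderConjugate.two_two hF
    (measurable_one.indicator hs).aemeasurable
  rw [hF_eq, h_ind] at holder
  have sq_sqrt (a : ℝ≥0∞) : (a ^ (1 / 2 : ℝ)) ^ 2 = a := by
    rw [← ENNReal.rpow_natCast, ← ENNReal.rpow_mul]; norm_num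
  calc (∫⁻ x, F x ∂μ) ^ 2
      ≤ ((∫⁻ x, F x ^ (2:ℝ) ∂μ) ^ (1 / 2 : ℝ) * μ s ^ (1 / 2 : ℝ)) ^ 2 := by gcongr
    _ = μ s * ∫⁻ x, F x ^ 2 ∂μ := by simp_rw [mul_pow, sq_sqrt, ENNReal.rpow_two, mul_comm]

lemma inv_two_pow_le_lintegral_g_sq (n : ℕ) :
    (2 ^ n)⁻¹ ≤ ∫⁻ ξ, ENNReal.ofReal (g n ξ ^ 2) := by
  have h := sq_lintegral_le_measure_mul_lintegral_sq (μ := volume) measurableSet_Ioo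
    (measurable_g n).ennreal_ofReal.aemeasurable
    fun ξ hξ ↦ support_g_subset n fun h ↦ hξ (by simp [h])
  rw [← ofReal_integral_eq_lintegral_ofReal (integrable_g n) (.of_forall (g_nonneg n)),
    integral_g, Real.volume_Ioo, show (2:ℝ) ^ (n + 1) - 2 ^ n = 2 ^ n by ring,
    ENNReal.ofReal_pow zero_le_two] at h
  simp_rw [ENNReal.ofReal_pow (g_nonneg n _)]
  rw [ENNReal.inv_le_iff_le_mul (by simp) (by simp)]
  simpa using h

lemma min_one_two_rpow_mul_rpow_le {a x : ℝ} (r : ℝ) (ha : 0 < a) (hax : a ≤ x)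
    (hx : x ≤ 2 * a) :
    min 1 (2 ^ r) * a ^ r ≤ x ^ r := by
  rcases le_or_gt 0 r with hr | hr
  · calc min 1 (2 ^ r) * a ^ r ≤ 1 * a ^ r := by gcongr; exact min_le_left _ _
      _ ≤ x ^ r := by rw [one_mul]; exact Real.rpow_le_rpow ha.le hax hr
  · calc min 1 (2 ^ r) * a ^ r ≤ 2 ^ r * a ^ r := by gcongr; exact min_le_right _ _
      _ = (2 * a) ^ r := (Real.mul_rpow zero_le_two ha.le).symm
      _ ≤ x ^ r := Real.rpow_le_rpow_of_nonpos (ha.trans_le hax) hx hr.le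

lemma ofReal_le_setLIntegral_Ioo_two_pow (s : ℝ) {w : ℝ → ℝ} {a : ℝ} (ha : 0 ≤ a) (m : ℕ)
    (h : ∀ ξ, a * g m ξ ≤ w ξ) :
    ENNReal.ofReal (min 1 (2 ^ (2 * s)) * ((2 : ℝ) ^ m) ^ (2 * s) * a ^ 2 / 2 ^ m) ≤
      ∫⁻ ξ in Ioo (2 ^ m) (2 ^ (m + 1)), ENNReal.ofReal (|ξ| ^ (2 * s) * w ξ ^ 2) := by
  set c := min 1 (2 ^ (2 * s)) * ((2 : ℝ) ^ m) ^ (2 * s) * a ^ 2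
  have hc : 0 ≤ c := by positivity
  have hpoint : ∀ ξ ∈ Ioo ((2 : ℝ) ^ m) (2 ^ (m + 1)),
      c * g m ξ ^ 2 ≤ |ξ| ^ (2 * s) * w ξ ^ 2 := by
    intro ξ ⟨hξ₁, hξ₂⟩
    have hweight : min 1 (2 ^ (2 * s)) * ((2 : ℝ) ^ m) ^ (2 * s) ≤ |ξ| ^ (2 * s) := by
      rw [abs_of_pos ((pow_pos two_pos m).trans hξ₁)]
      exact min_one_two_rpow_mul_rpow_le _ (pow_pos two_pos m) hξ₁.le
        (by rw [← pow_succ']; exact hξ₂.le)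
    calc c * g m ξ ^ 2
        = min 1 (2 ^ (2 * s)) * ((2 : ℝ) ^ m) ^ (2 * s) * (a * g m ξ) ^ 2 := by ring
      _ ≤ |ξ| ^ (2 * s) * w ξ ^ 2 := by
        gcongr
        · exact mul_nonneg ha (g_nonneg m ξ)
        · exact h ξ
  calc ENNReal.ofReal (c / 2 ^ m)
      = ENNReal.ofReal c * (2 ^ m)⁻¹ := by
        rw [div_eq_mul_inv, ENNReal.ofReal_mul hc, ENNReal.ofReal_inv_of_pos (by positivity),
          ENNReal.ofReal_pow zero_le_two, ENNReal.ofReal_ofNat]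
    _ ≤ ENNReal.ofReal c * ∫⁻ ξ, ENNReal.ofReal (g m ξ ^ 2) := by
        gcongr; exact inv_two_pow_le_lintegral_g_sq m
    _ = ∫⁻ ξ, ENNReal.ofReal (c * g m ξ ^ 2) := by
        simp_rw [ENNReal.ofReal_mul hc]
        exact (lintegral_const_mul' _ _ ENNReal.ofReal_ne_top).symm
    _ = ∫⁻ ξ in Ioo (2 ^ m) (2 ^ (m + 1)), ENNReal.ofReal (c * g m ξ ^ 2) := by
        refine (setLIntegral_eq_of_support_subset fun ξ hξ ↦
          support_g_subset m fun h ↦ hξ ?_).symm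
        simp [h]
    _ ≤ _ := setLIntegral_mono' measurableSet_Ioo fun ξ hξ ↦
        ENNReal.ofReal_le_ofReal (hpoint ξ hξ)

lemma exp_Tstar_mul (x : ℝ) : Real.exp (-(3 / 2) * Tstar * x) = 2 ^ (-x) := by
  rw [Real.rpow_def_of_pos two_pos, Tstar]
  ring_nf

lemma exp_Tstar_mul_two_zpow :
    Real.exp (-(3 / 2) * Tstar * 2 ^ 5) * (2 : ℝ) ^ (-(10 : ℤ)) = (2 : ℝ) ^ (-(42 : ℤ)) := by
  rw [exp_Tstar_mul, ← Real.rpow_intCast, ← Real.rpow_intCast, ← Real.rpow_add two_pos]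
  norm_num

lemma f_Tstar (m : ℕ) : f m Tstar = 2 ^ (5 * (m + 1)) * ((2 : ℝ) ^ (-(21 : ℤ))) ^ 2 ^ m := by
  rw [f, exp_Tstar_mul, ← Real.rpow_natCast 2 (5 * m), ← Real.rpow_add two_pos,
    ← Real.rpow_add two_pos, ← Real.rpow_natCast 2 (5 * (m + 1)), ← Real.rpow_intCast,
    ← Real.rpow_natCast _ (2 ^ m), ← Real.rpow_mul zero_le_two, ← Real.rpow_add two_pos]
  congr 1
  push_cast
  ring

lemma two_zpow_pow_le_sq_f_Tstar (m : ℕ) : ((2 : ℝ) ^ (-(42 : ℤ))) ^ 2 ^ m ≤ f m Tstar ^ 2 := by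
  rw [f_Tstar, mul_pow, ← pow_mul, pow_right_comm,
    show ((2 : ℝ) ^ (-(21 : ℤ))) ^ 2 = 2 ^ (-(42 : ℤ)) by norm_num]
  exact le_mul_of_one_le_left (by positivity) (one_le_pow₀ one_le_two)

lemma ofReal_mul_le_setLIntegral_Ioo_two_pow (s : ℝ) {η : ℝ} (hη : 0 ≤ η) {w : ℝ → ℝ}
    (hlow : ∀ n : ℕ, ∀ ξ : ℝ, η ^ (2 ^ n) * f n Tstar * g n ξ ≤ w ξ) (m : ℕ) :
    ENNReal.ofReal (min 1 (2 ^ (2 * s))) *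
        ENNReal.ofReal (2 ^ ((m : ℝ) * (2 * s - 1)) * (η ^ 2 * 2 ^ (-(42 : ℤ))) ^ 2 ^ m) ≤
      ∫⁻ ξ in Ioo (2 ^ m) (2 ^ (m + 1)), ENNReal.ofReal (|ξ| ^ (2 * s) * w ξ ^ 2) := by
  have hf : 0 ≤ f m Tstar := by rw [f_Tstar]; positivity
  refine le_trans ?_ (ofReal_le_setLIntegral_Ioo_two_pow s (by positivity) m (hlow m))
  rw [← ENNReal.ofReal_mul (by positivity)]
  apply ENNReal.ofReal_le_ofReal
  have hweight : ((2 : ℝ) ^ m) ^ (2 * s) / 2 ^ m = 2 ^ ((m : ℝ) * (2 * s - 1)) := by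
    rw [← Real.rpow_natCast 2 m, ← Real.rpow_mul zero_le_two, ← Real.rpow_sub two_pos]
    ring_nf
  calc min 1 (2 ^ (2 * s)) * (2 ^ ((m : ℝ) * (2 * s - 1)) * (η ^ 2 * 2 ^ (-(42 : ℤ))) ^ 2 ^ m)
      = min 1 (2 ^ (2 * s)) * 2 ^ ((m : ℝ) * (2 * s - 1)) *
          ((η ^ 2 ^ m) ^ 2 * ((2 : ℝ) ^ (-(42 : ℤ))) ^ 2 ^ m) := by
        rw [mul_pow, pow_right_comm]; ring
    _ ≤ min 1 (2 ^ (2 * s)) * 2 ^ ((m : ℝ) * (2 * s - 1)) *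
          ((η ^ 2 ^ m) ^ 2 * f m Tstar ^ 2) := by
        gcongr; exact two_zpow_pow_le_sq_f_Tstar m
    _ = min 1 (2 ^ (2 * s)) * ((2 : ℝ) ^ m) ^ (2 * s) * (η ^ 2 ^ m * f m Tstar) ^ 2 /
          2 ^ m := by
        rw [← hweight]; ring

theorem hs_norm_lower_bound_general (s η : ℝ) (hη : 0 < η)
    (w : ℝ → ℝ)
    (hlow : ∀ n : ℕ, ∀ ξ : ℝ, η ^ (2 ^ n) * f n Tstar * g n ξ ≤ w ξ) :
    (0 : ℝ) < min 1 ((2:ℝ) ^ (2*s)) ∧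
    Real.exp (-(3/2) * Tstar * 2 ^ 5) * (2:ℝ) ^ (-(10:ℤ)) = (2:ℝ) ^ (-(42:ℤ)) ∧
    ENNReal.ofReal (min 1 ((2:ℝ) ^ (2*s))) *
        ∑' n : ℕ, ENNReal.ofReal ((2:ℝ) ^ (((n:ℝ) + 1) * (2*s - 1)) *
          (η ^ 2 * Real.exp (-(3/2) * Tstar * 2 ^ 5) * (2:ℝ) ^ (-(10:ℤ))) ^ (2 ^ (n + 1)))
      ≤ ∫⁻ ξ : ℝ, ENNReal.ofReal (|ξ| ^ (2*s) * (w ξ) ^ 2) := by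
  refine ⟨lt_min one_pos (by positivity), exp_Tstar_mul_two_zpow, ?_⟩
  have hdisj : Pairwise
      (Function.onFun Disjoint fun n : ℕ ↦ Ioo ((2 : ℝ) ^ (n + 1)) (2 ^ (n + 1 + 1))) :=
    ((pow_right_mono₀ one_le_two).comp (add_left_mono (a := 1))).pairwise_disjoint_on_Ioo_succ
  rw [mul_assoc, exp_Tstar_mul_two_zpow, ← ENNReal.tsum_mul_left]
  calc _ ≤ ∑' n : ℕ, ∫⁻ ξ in Ioo (2 ^ (n + 1)) (2 ^ (n + 1 + 1)),
          ENNReal.ofReal (|ξ| ^ (2 * s) * w ξ ^ 2) :=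
        ENNReal.tsum_le_tsum fun n ↦ by
          exact_mod_cast ofReal_mul_le_setLIntegral_Ioo_two_pow s hη.le hlow (n + 1)
    _ = ∫⁻ ξ in ⋃ n : ℕ, Ioo (2 ^ (n + 1)) (2 ^ (n + 1 + 1)),
          ENNReal.ofReal (|ξ| ^ (2 * s) * w ξ ^ 2) :=
        (lintegral_iUnion (fun _ ↦ measurableSet_Ioo) hdisj _).symm
    _ ≤ _ := setLIntegral_le_lintegral _ _

/-- Lower bound for the (squared) `Ḣˢ` norm: if the nonnegative measurable `w`
satisfies `w(ξ) ≥ η^(2^n) f_n(T_*) g_n(ξ)` for all `n` and `ξ`, then with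
`C = min(1, 2^(2s)) > 0` one has (in `[0,∞]`)
`∫ |ξ|^(2s) w(ξ)² dξ ≥ C ∑_{n≥1} 2^(n(2s-1)) (η² e^{-(3/2)T_* 2^5} 2^(-10))^(2^n)`,
where moreover `e^{-(3/2)T_* 2^5} · 2^(-10) = 2^(-42)`. -/
theorem hs_norm_lower_bound (s η : ℝ) (hη : 0 < η)
    (w : ℝ → ℝ) (hwmeas : Measurable w) (hwpos : ∀ ξ, 0 ≤ w ξ)
    (hlow : ∀ n : ℕ, ∀ ξ : ℝ, η ^ (2 ^ n) * f n Tstar * g n ξ ≤ w ξ) :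
    (0 : ℝ) < min 1 ((2:ℝ) ^ (2*s)) ∧
    Real.exp (-(3/2) * Tstar * 2 ^ 5) * (2:ℝ) ^ (-(10:ℤ)) = (2:ℝ) ^ (-(42:ℤ)) ∧
    ENNReal.ofReal (min 1 ((2:ℝ) ^ (2*s))) *
        ∑' n : ℕ, ENNReal.ofReal ((2:ℝ) ^ (((n:ℝ) + 1) * (2*s - 1)) *
          (η ^ 2 * Real.exp (-(3/2) * Tstar * 2 ^ 5) * (2:ℝ) ^ (-(10:ℤ))) ^ (2 ^ (n + 1)))
      ≤ ∫⁻ ξ : ℝ, ENNReal.ofReal (|ξ| ^ (2*s) * (w ξ) ^ 2) :=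
  hs_norm_lower_bound_general s η hη w hlow
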